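/- Every Bψ-perfect graph is perfect; that is, if for every induced subgraph H of G the pseudo-b-chromatic number of H equals the pseudoachromatic number of H, then for every induced subgraph H of G the chromatic number of H equals the clique number of H. -/

import Mathlib

open SimpleGraph

/-- A `k`-coloring `c` of `G` is *complete* if it is surjective and for every pair of distinct
colors there is an edge of `G` whose endpoints receive those two colors. -/
def IsCompleteColoring {V : Type*} (G : SimpleGraph V) {k : ℕ} (c : V → Fin k) : Prop :=
  Function.Surjective c ∧
    ∀ i j : Fin k, i ≠ j → ∃ u v : V, G.Adj u v ∧ c u = i ∧ c v = j

/-- A coloring is *proper* if adjacent vertices receive distinct colors. -/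
def IsProperColoring {V : Type*} (G : SimpleGraph V) {k : ℕ} (c : V → Fin k) : Prop :=
  ∀ u v : V, G.Adj u v → c u ≠ c v

/-- A `k`-coloring `c` of `G` is *dominating* if it is surjective and every color class contains
a vertex having a neighbor in every other color class. -/
def IsDominatingColoring {V : Type*} (G : SimpleGraph V) {k : ℕ} (c : V → Fin k) : Prop :=
  Function.Surjective c ∧
    ∀ i : Fin k, ∃ v : V, c v = i ∧ ∀ j : Fin k, j ≠ i → ∃ u : V, G.Adj v u ∧ c u = j

/-- A `k`-coloring `c` of `G` is *pseudo-Grundy* if it is surjective and every vertex is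
adjacent to at least one vertex of each smaller color. -/
def IsPseudoGrundyColoring {V : Type*} (G : SimpleGraph V) {k : ℕ} (c : V → Fin k) : Prop :=
  Function.Surjective c ∧
    ∀ v : V, ∀ j : Fin k, j < c v → ∃ u : V, G.Adj v u ∧ c u = j

/-- The pseudoachromatic number `ψ(G)`: the largest `k` admitting a complete `k`-coloring. -/
noncomputable def pseudoachromaticNumber {V : Type*} (G : SimpleGraph V) : ℕ :=
  sSup {k | ∃ c : V → Fin k, IsCompleteColoring G c}

/-- The achromatic number `α(G)`: the largest `k` admitting a proper complete `k`-coloring. -/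
noncomputable def achromaticNumber {V : Type*} (G : SimpleGraph V) : ℕ :=
  sSup {k | ∃ c : V → Fin k, IsProperColoring G c ∧ IsCompleteColoring G c}

/-- The b-chromatic number `b(G)`: the largest `k` admitting a proper dominating `k`-coloring. -/
noncomputable def bChromaticNumber {V : Type*} (G : SimpleGraph V) : ℕ :=
  sSup {k | ∃ c : V → Fin k, IsProperColoring G c ∧ IsDominatingColoring G c}

/-- The pseudo-b-chromatic number `B(G)`: the largest `k` admitting a dominating `k`-coloring. -/
noncomputable def pseudoBChromaticNumber {V : Type*} (G : SimpleGraph V) : ℕ :=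
  sSup {k | ∃ c : V → Fin k, IsDominatingColoring G c}

/-- The Grundy number `Γ(G)`: the largest `k` admitting a proper pseudo-Grundy `k`-coloring. -/
noncomputable def grundyNumber {V : Type*} (G : SimpleGraph V) : ℕ :=
  sSup {k | ∃ c : V → Fin k, IsProperColoring G c ∧ IsPseudoGrundyColoring G c}

/-- The pseudo-Grundy number `γ(G)`: the largest `k` admitting a pseudo-Grundy `k`-coloring. -/
noncomputable def pseudoGrundyNumber {V : Type*} (G : SimpleGraph V) : ℕ :=
  sSup {k | ∃ c : V → Fin k, IsPseudoGrundyColoring G c}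

/-- `G` contains the complete graph `K_k` as a minor: there are `k` pairwise disjoint
"branch sets", each inducing a connected (nonempty) subgraph, with an edge of `G` between
every two of them. -/
def HasCompleteMinor {V : Type*} (G : SimpleGraph V) (k : ℕ) : Prop :=
  ∃ B : Fin k → Set V,
    (∀ i, (G.induce (B i)).Connected) ∧
    (∀ i j : Fin k, i ≠ j → Disjoint (B i) (B j)) ∧
    (∀ i j : Fin k, i ≠ j → ∃ u ∈ B i, ∃ v ∈ B j, G.Adj u v)

/-- The Hadwiger number `h(G)`: the largest `k` such that `K_k` is a minor of `G`. -/
noncomputable def hadwigerNumber {V : Type*} (G : SimpleGraph V) : ℕ :=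
  sSup {k | HasCompleteMinor G k}

/-- `G` has an induced subgraph isomorphic to `H`. -/
def HasInducedCopy {V : Type*} {W : Type*} (G : SimpleGraph V) (H : SimpleGraph W) : Prop :=
  ∃ s : Set V, Nonempty (G.induce s ≃g H)

/-- A graph is *chordal* if it has no induced cycle on four or more vertices. -/
def IsChordal {V : Type*} (G : SimpleGraph V) : Prop :=
  ∀ n : ℕ, 4 ≤ n → ¬ HasInducedCopy G (cycleGraph n)

/-- The diamond graph `D`: `K₄` minus one edge. -/
def diamondGraph : SimpleGraph (Fin 4) :=
  (⊤ : SimpleGraph (Fin 4)).deleteEdges {s(0, 1)}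

/-!
The paths and cycles on four vertices have pseudo-b-chromatic number `2` but pseudoachromatic
number `3`, so a Bψ-perfect graph contains neither `P₄` nor `C₄` as an induced subgraph. Such
graphs satisfy `χ = ω` by induction on the order: if a vertex `v` of maximum degree is
universal, it costs one colour and adds one vertex to every maximum clique of `G - v`; otherwise
`P₄`- and `C₄`-freeness together with the maximality of `deg v` force the closed neighbourhood of
`v` to have no edge leaving it, and the two sides of this cut are coloured independently.
-/

def IsPseudoBPseudoachromaticPerfect {V : Type*} (G : SimpleGraph V) : Prop :=
  ∀ s : Set V, pseudoBChromaticNumber (G.induce s) = pseudoachromaticNumber (G.induce s)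

section Invariance

variable {V W : Type*} {G : SimpleGraph V} {H : SimpleGraph W} {k : ℕ}

lemma IsDominatingColoring.comp_iso {c : W → Fin k} (hc : IsDominatingColoring H c)
    (e : G ≃g H) : IsDominatingColoring G (c ∘ e) := by
  obtain ⟨hsurj, hdom⟩ := hc
  refine ⟨hsurj.comp e.surjective, fun i => ?_⟩
  obtain ⟨v, hv, hvdom⟩ := hdom i
  refine ⟨e.symm v, by simpa using hv, fun j hj => ?_⟩
  obtain ⟨u, hvu, hu⟩ := hvdom j hj
  exact ⟨e.symm u, e.symm.map_adj_iff.mpr hvu, by simpa using hu⟩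

lemma IsCompleteColoring.comp_iso {c : W → Fin k} (hc : IsCompleteColoring H c)
    (e : G ≃g H) : IsCompleteColoring G (c ∘ e) := by
  obtain ⟨hsurj, hcomp⟩ := hc
  refine ⟨hsurj.comp e.surjective, fun i j hij => ?_⟩
  obtain ⟨u, v, huv, hu, hv⟩ := hcomp i j hij
  exact ⟨e.symm u, e.symm v, e.symm.map_adj_iff.mpr huv, by simpa using hu, by simpa using hv⟩

lemma SimpleGraph.Iso.pseudoBChromaticNumber_eq (e : G ≃g H) :
    pseudoBChromaticNumber G = pseudoBChromaticNumber H := by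
  unfold pseudoBChromaticNumber
  congr 1
  ext k
  exact ⟨fun ⟨c, hc⟩ => ⟨c ∘ e.symm, hc.comp_iso e.symm⟩,
    fun ⟨c, hc⟩ => ⟨c ∘ e, hc.comp_iso e⟩⟩

lemma SimpleGraph.Iso.pseudoachromaticNumber_eq (e : G ≃g H) :
    pseudoachromaticNumber G = pseudoachromaticNumber H := by
  unfold pseudoachromaticNumber
  congr 1
  ext k
  exact ⟨fun ⟨c, hc⟩ => ⟨c ∘ e.symm, hc.comp_iso e.symm⟩,
    fun ⟨c, hc⟩ => ⟨c ∘ e, hc.comp_iso e⟩⟩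

lemma IsPseudoBPseudoachromaticPerfect.not_isIndContained (hG : IsPseudoBPseudoachromaticPerfect G)
    (hH : pseudoBChromaticNumber H ≠ pseudoachromaticNumber H) : ¬ H ⊴ G := by
  intro hHG
  obtain ⟨s, ⟨e⟩⟩ := isIndContained_iff_exists_iso_induce.mp hHG
  exact hH (by rw [e.pseudoBChromaticNumber_eq, e.pseudoachromaticNumber_eq, hG s])

end Invariance

section SmallGraphs

variable {V : Type*} {G : SimpleGraph V} {k : ℕ}

lemma IsCompleteColoring.le_pseudoachromaticNumber [Finite V] {c : V → Fin k}
    (hc : IsCompleteColoring G c) : k ≤ pseudoachromaticNumber G :=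
  le_csSup
    ⟨Nat.card V, fun _ ⟨c', hc'⟩ => by simpa using Nat.card_le_card_of_surjective c' hc'.1⟩
    ⟨c, hc⟩

lemma pseudoBChromaticNumber_le [Finite V] {n : ℕ}
    (h : ∀ k, n < k → k ≤ Nat.card V → ∀ c : V → Fin k, ¬ IsDominatingColoring G c) :
    pseudoBChromaticNumber G ≤ n := by
  refine csSup_le' fun k ⟨c, hc⟩ => ?_
  by_contra! hk
  exact h k hk (by simpa using Nat.card_le_card_of_surjective c hc.1) c hc

instance (n : ℕ) : DecidableRel (pathGraph n).Adj := fun _ _ => decidable_of_iff' _ pathGraph_adj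

set_option maxRecDepth 4000 in
lemma pseudoBChromaticNumber_pathGraph_four_lt :
    pseudoBChromaticNumber (pathGraph 4) < pseudoachromaticNumber (pathGraph 4) := by
  refine (pseudoBChromaticNumber_le (n := 2) fun k hk hk4 => ?_).trans_lt
    (IsCompleteColoring.le_pseudoachromaticNumber (c := (![0, 1, 2, 0] : Fin 4 → Fin 3)) ?_)
  · simp only [Nat.card_eq_fintype_card, Fintype.card_fin] at hk4
    unfold IsDominatingColoring
    interval_cases k <;> decide
  · unfold IsCompleteColoring
    decide

set_option maxRecDepth 4000 in
lemma pseudoBChromaticNumber_cycleGraph_four_lt :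
    pseudoBChromaticNumber (cycleGraph 4) < pseudoachromaticNumber (cycleGraph 4) := by
  refine (pseudoBChromaticNumber_le (n := 2) fun k hk hk4 => ?_).trans_lt
    (IsCompleteColoring.le_pseudoachromaticNumber (c := (![0, 1, 2, 0] : Fin 4 → Fin 3)) ?_)
  · simp only [Nat.card_eq_fintype_card, Fintype.card_fin] at hk4
    unfold IsDominatingColoring
    interval_cases k <;> decide
  · unfold IsCompleteColoring
    decide

end SmallGraphs

namespace SimpleGraph

variable {V : Type*} {G : SimpleGraph V} {n : ℕ}

lemma pathGraph_four_isIndContained {a b c d : V} (hab : G.Adj a b) (hbc : G.Adj b c)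
    (hcd : G.Adj c d) (hac : ¬ G.Adj a c) (had : ¬ G.Adj a d) (hbd : ¬ G.Adj b d) :
    pathGraph 4 ⊴ G := by
  have nac : a ≠ c := by rintro rfl; exact had hcd
  have nad : a ≠ d := by rintro rfl; exact hac hcd.symm
  have nbd : b ≠ d := by rintro rfl; exact had hab
  refine ⟨⟨⟨![a, b, c, d], fun i j hij => ?_⟩, fun {i j} => ?_⟩⟩
  · fin_cases i <;> fin_cases j <;> simp_all [hab.ne, hbc.ne, hcd.ne, eq_comm]
  · change G.Adj (![a, b, c, d] i) (![a, b, c, d] j) ↔ _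
    fin_cases i <;> fin_cases j <;>
      simp +decide [hab, hbc, hcd, hac, had, hbd, hab.symm, hbc.symm, hcd.symm,
        G.adj_comm c a, G.adj_comm d a, G.adj_comm d b]

lemma cycleGraph_four_isIndContained {a b c d : V} (hab : G.Adj a b) (hbc : G.Adj b c)
    (hcd : G.Adj c d) (hda : G.Adj d a) (hac : ¬ G.Adj a c) (hbd : ¬ G.Adj b d) (nac : a ≠ c)
    (nbd : b ≠ d) : cycleGraph 4 ⊴ G := by
  refine ⟨⟨⟨![a, b, c, d], fun i j hij => ?_⟩, fun {i j} => ?_⟩⟩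
  · fin_cases i <;> fin_cases j <;> simp_all [hab.ne, hbc.ne, hcd.ne, hda.ne, eq_comm]
  · change G.Adj (![a, b, c, d] i) (![a, b, c, d] j) ↔ _
    fin_cases i <;> fin_cases j <;>
      simp +decide [hab, hbc, hcd, hda, hac, hbd, hab.symm, hbc.symm, hcd.symm,
        hda.symm, G.adj_comm c a, G.adj_comm d b]

lemma not_isIndContained_induce {W : Type*} {H : SimpleGraph W} (h : ¬ H ⊴ G) (s : Set V) :
    ¬ H ⊴ G.induce s :=
  fun hs => h (hs.trans (Embedding.induce s).isIndContained)

lemma adj_of_adj_of_not_adj (hP : ¬ pathGraph 4 ⊴ G) (hC : ¬ cycleGraph 4 ⊴ G) {v w x y : V}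
    (hvw : G.Adj v w) (hwx : G.Adj w x) (hvx : ¬ G.Adj v x) (hxv : x ≠ v) (hvy : G.Adj v y)
    (hyw : y ≠ w) : G.Adj w y := by
  by_contra hwy
  -- otherwise `v w x y` is an induced `C₄` or `x w v y` an induced `P₄`
  by_cases hxy : G.Adj x y
  · exact hC (cycleGraph_four_isIndContained hvw hwx hxy hvy.symm hvx hwy hxv.symm hyw.symm)
  · exact hP (pathGraph_four_isIndContained hwx.symm hvw.symm hvy (fun h => hvx h.symm) hxy
      hwy)

lemma ncard_neighborSet_lt [Finite V] (hP : ¬ pathGraph 4 ⊴ G) (hC : ¬ cycleGraph 4 ⊴ G)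
    {v w x : V} (hvw : G.Adj v w) (hwx : G.Adj w x) (hvx : ¬ G.Adj v x) (hxv : x ≠ v) :
    (G.neighborSet v).ncard < (G.neighborSet w).ncard := by
  have hsub : insert v (insert x (G.neighborSet v \ {w})) ⊆ G.neighborSet w := by
    rintro y (rfl | rfl | ⟨hvy, hyw⟩)
    exacts [hvw.symm, hwx, adj_of_adj_of_not_adj hP hC hvw hwx hvx hxv hvy hyw]
  have hv : v ∉ insert x (G.neighborSet v \ {w}) := by
    rintro (h | ⟨h, -⟩)
    exacts [hxv h.symm, G.irrefl h]
  calc (G.neighborSet v).ncard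
      < (insert v (insert x (G.neighborSet v \ {w}))).ncard := by
        rw [Set.ncard_insert_of_notMem hv, Set.ncard_insert_of_notMem (fun h => hvx h.1),
          Set.ncard_sdiff_singleton_of_mem (s := G.neighborSet v) hvw]
        have := (Set.ncard_pos (Set.toFinite _)).mpr ⟨w, hvw⟩
        omega
    _ ≤ (G.neighborSet w).ncard := Set.ncard_le_ncard hsub

lemma not_adj_of_mem_insert_neighborSet [Finite V] (hP : ¬ pathGraph 4 ⊴ G)
    (hC : ¬ cycleGraph 4 ⊴ G) {v : V}
    (hmax : ∀ u, (G.neighborSet u).ncard ≤ (G.neighborSet v).ncard) {w x : V}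
    (hw : w ∈ insert v (G.neighborSet v)) (hx : x ∉ insert v (G.neighborSet v)) :
    ¬ G.Adj w x := by
  rcases hw with rfl | hvw
  · exact fun hwx => hx (Or.inr hwx)
  · exact fun hwx => (hmax w).not_gt
      (ncard_neighborSet_lt hP hC hvw hwx (fun h => hx (Or.inr h)) (fun h => hx (Or.inl h)))

lemma Colorable.of_induce_of_induce_compl {s : Set V} (hs : ∀ u ∈ s, ∀ v ∉ s, ¬ G.Adj u v)
    (h₁ : (G.induce s).Colorable n) (h₂ : (G.induce sᶜ).Colorable n) : G.Colorable n := by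
  classical
  obtain ⟨c₁⟩ := h₁
  obtain ⟨c₂⟩ := h₂
  refine ⟨Coloring.mk (fun v => if h : v ∈ s then c₁ ⟨v, h⟩ else c₂ ⟨v, h⟩)
    fun {u v} huv => ?_⟩
  by_cases hu : u ∈ s <;> by_cases hv : v ∈ s
  · simpa only [dif_pos hu, dif_pos hv] using c₁.valid (v := ⟨u, hu⟩) (w := ⟨v, hv⟩) huv
  · exact absurd huv (hs u hu v hv)
  · exact absurd huv.symm (hs v hv u hu)
  · simpa only [dif_neg hu, dif_neg hv] using c₂.valid (v := ⟨u, hu⟩) (w := ⟨v, hv⟩) huv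

lemma Colorable.succ_of_induce_compl_singleton {v : V} (h : (G.induce {v}ᶜ).Colorable n) :
    G.Colorable (n + 1) := by
  classical
  obtain ⟨c⟩ := h
  refine ⟨Coloring.mk (fun u => if hu : u = v then Fin.last n else (c ⟨u, hu⟩).castSucc)
    fun {x y} hxy => ?_⟩
  by_cases hx : x = v <;> by_cases hy : y = v
  · subst hx hy
    exact (G.irrefl hxy).elim
  · simpa only [dif_pos hx, dif_neg hy] using (Fin.castSucc_lt_last _).ne'
  · simpa only [dif_neg hx, dif_pos hy] using (Fin.castSucc_lt_last _).ne
  · simpa only [dif_neg hx, dif_neg hy] using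
      (Fin.castSucc_injective n).ne (c.valid (v := ⟨x, hx⟩) (w := ⟨y, hy⟩) hxy)

lemma cliqueNum_induce_compl_singleton_add_one_le [Finite V] {v : V}
    (hv : ∀ u ≠ v, G.Adj v u) : (G.induce {v}ᶜ).cliqueNum + 1 ≤ G.cliqueNum := by
  classical
  obtain ⟨t, ht⟩ := (G.induce {v}ᶜ).exists_isNClique_cliqueNum
  rw [isNClique_induce_iff] at ht
  have hvt : ∀ u ∈ t.map (.subtype _), G.Adj v u := by
    simp only [Finset.mem_map, Function.Embedding.coe_subtype]
    rintro _ ⟨u, -, rfl⟩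
    exact hv u u.2
  have := (ht.insert hvt).isClique.card_le_cliqueNum
  rwa [(ht.insert hvt).card_eq] at this

theorem colorable_cliqueNum_of_not_isIndContained [Finite V] (hP : ¬ pathGraph 4 ⊴ G)
    (hC : ¬ cycleGraph 4 ⊴ G) : G.Colorable G.cliqueNum := by
  induction hn : Nat.card V using Nat.strong_induction_on generalizing V with
  | _ m ih =>
  have ih_induce (s : Set V) (u : V) (hu : u ∉ s) :
      (G.induce s).Colorable (G.induce s).cliqueNum :=
    ih _ (hn ▸ (Nat.card_coe_set_eq s).trans_lt (Set.ncard_lt_card (by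
      rintro rfl; exact hu trivial))) (not_isIndContained_induce hP s)
      (not_isIndContained_induce hC s) rfl
  cases isEmpty_or_nonempty V
  · exact .of_isEmpty _
  obtain ⟨v, hmax⟩ := Finite.exists_max fun u => (G.neighborSet u).ncard
  by_cases huniv : ∀ u ≠ v, G.Adj v u
  · exact (Colorable.succ_of_induce_compl_singleton (ih_induce {v}ᶜ v (by simp))).mono
      (cliqueNum_induce_compl_singleton_add_one_le huniv)
  push Not at huniv
  obtain ⟨u, huv, hvu⟩ := huniv
  refine Colorable.of_induce_of_induce_compl (s := insert v (G.neighborSet v))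
    (fun w hw x hx => not_adj_of_mem_insert_neighborSet hP hC hmax hw hx)
    ((ih_induce _ u ?_).mono (cliqueNum_induce_le _))
    ((ih_induce _ v (by simp)).mono (cliqueNum_induce_le _))
  rintro (rfl | h)
  exacts [huv rfl, hvu h]

end SimpleGraph

/-- Every Bψ-perfect graph is perfect. -/
theorem pseudoB_pseudoachromatic_perfect_is_perfect {V : Type*} [Fintype V] (G : SimpleGraph V)
    (h : ∀ s : Set V,
      pseudoBChromaticNumber (G.induce s) = pseudoachromaticNumber (G.induce s)) :
    ∀ s : Set V, (G.induce s).chromaticNumber = ((G.induce s).cliqueNum : ℕ∞) := by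
  have hG : IsPseudoBPseudoachromaticPerfect G := h
  have hP := hG.not_isIndContained pseudoBChromaticNumber_pathGraph_four_lt.ne
  have hC := hG.not_isIndContained pseudoBChromaticNumber_cycleGraph_four_lt.ne
  intro s
  have hcol := colorable_cliqueNum_of_not_isIndContained
    (not_isIndContained_induce hP s) (not_isIndContained_induce hC s)
  exact le_antisymm hcol.chromaticNumber_le (G.induce s).cliqueNum_le_chromaticNumber
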